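/- Assume for each positive integer L and each zero-average 2πL-periodic holomorphic g with ‖g‖_ρ < ∞ and each ω ∈ Ω_γ, there is for each δ>0 a 2πL-periodic solution f of Df(ω)=g with ‖f‖_{ρ−δ} ≤ (k_n L^{2n+1}/(γδ^{2n}))‖g‖_ρ. Let g ∈ C_{ρ,ℚ} with zero constant Pontryagin coefficient, ω ∈ Ω_γ, and suppose there is a divisibility-increasing cofinal sequence S = (n_i) with ‖g‖_{ρ,S,n} < ∞. Then for every δ>0 there exists f ∈ C_{ρ−δ,ℚ} solving Df(ω) = g with ‖f‖_{ρ−δ} ≤ (k_n/(γδ^{2n})) ‖g‖_{ρ,S,n}. -/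

import Mathlib

noncomputable section

open MeasureTheory Filter

/-- The strip `{z ∈ ℂⁿ : ‖Im z‖ < ρ}`. -/
def strip (n : ℕ) (ρ : ℝ) : Set (Fin n → ℂ) := {z | ‖(fun i => (z i).im : Fin n → ℝ)‖ < ρ}

/-- `f` is `2πL`-periodic in each real variable. -/
def IsPeriodicL (n : ℕ) (L : ℝ) (f : (Fin n → ℂ) → ℂ) : Prop :=
  ∀ (z : Fin n → ℂ) (i : Fin n),
    f (Function.update z i (z i + ((2 * Real.pi * L : ℝ) : ℂ))) = f z

/-- `g` has zero average with respect to the real variables over a period box. -/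
def ZeroAvg (n : ℕ) (L : ℝ) (g : (Fin n → ℂ) → ℂ) : Prop :=
  ∫ x in Set.univ.pi (fun _ : Fin n => Set.Icc (0 : ℝ) (2 * Real.pi * L)),
    g (fun i => ((x i : ℝ) : ℂ)) = 0

/-- `f` solves the diophantine equation `Df(ω) = g` on `S`. -/
def SolvesDiophantine (n : ℕ) (ω : Fin n → ℝ) (f g : (Fin n → ℂ) → ℂ)
    (S : Set (Fin n → ℂ)) : Prop :=
  ∀ z ∈ S, deriv (fun t : ℂ => f (fun i => z i + t * ((ω i : ℝ) : ℂ))) 0 = g z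

/-- The set `Ω_γ` of diophantine vectors with constant `γ`. -/
def DiophSet (n : ℕ) (γ : ℝ) : Set (Fin n → ℝ) :=
  {ω | ∀ k : Fin n → ℤ, k ≠ 0 →
    γ / ‖(fun i => (k i : ℝ) : Fin n → ℝ)‖ ^ n < |∑ i, ω i * (k i : ℝ)|}

/-- `‖g‖_ρ`, the supremum of `|g|` over the strip. -/
def supOn (n : ℕ) (ρ : ℝ) (g : (Fin n → ℂ) → ℂ) : ℝ :=
  sSup ((fun z => ‖g z‖) '' strip n ρ)

/-!
Write `g` as the telescoping series `g_{n_0} + ∑ (g_{n_{i+1}} - g_{n_i})`. Each piece is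
`2π n_i`-periodic with zero average (zero average passes to multiples of the period, because the
large period box is tiled by translates of the small one), so the periodic theorem solves it with
the bound `k_n n_i^{2n+1} ‖piece‖_ρ / (γ δ^{2n})`. These bounds are summable, hence the solutions
sum uniformly on the narrower strip; the sum is holomorphic, is uniformly approximated by its
periodic partial sums, and solves `Df(ω) = g` because differentiation along `ω` commutes with a
uniformly convergent series of holomorphic functions.
-/

open Set Topology

theorem isOpen_strip (n : ℕ) (ρ : ℝ) : IsOpen (strip n ρ) :=
  isOpen_lt (by fun_prop) continuous_const

theorem strip_subset_strip {n : ℕ} {ρ ρ' : ℝ} (h : ρ' ≤ ρ) : strip n ρ' ⊆ strip n ρ :=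
  fun _ hz => lt_of_lt_of_le hz h

theorem ofReal_mem_strip {n : ℕ} {ρ : ℝ} (hρ : 0 < ρ) (x : Fin n → ℝ) :
    (fun i => (x i : ℂ)) ∈ strip n ρ := by
  simp [strip, ← Pi.zero_def, hρ]

section Periodic

variable {n : ℕ}

theorem IsPeriodicL.periodic_update {L : ℝ} {f : (Fin n → ℂ) → ℂ} (hf : IsPeriodicL n L f)
    (z : Fin n → ℂ) (i : Fin n) :
    Function.Periodic (fun t => f (Function.update z i t)) ((2 * Real.pi * L : ℝ) : ℂ) :=
  fun t => by simpa using hf (Function.update z i t) i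

theorem IsPeriodicL.of_dvd {L L' : ℕ} {f : (Fin n → ℂ) → ℂ} (hf : IsPeriodicL n L f)
    (h : L ∣ L') : IsPeriodicL n L' f := by
  obtain ⟨d, rfl⟩ := h
  intro z i
  convert (hf.periodic_update z i).nat_mul d (z i) using 2
  · push_cast; ring_nf
  · simp

theorem IsPeriodicL.sub {L : ℝ} {f g : (Fin n → ℂ) → ℂ} (hf : IsPeriodicL n L f)
    (hg : IsPeriodicL n L g) : IsPeriodicL n L (f - g) := fun z i => by
  simp only [Pi.sub_apply, hf z i, hg z i]

theorem IsPeriodicL.finset_sum {ι : Type*} {L : ℝ} {F : ι → (Fin n → ℂ) → ℂ} {s : Finset ι}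
    (h : ∀ i ∈ s, IsPeriodicL n L (F i)) : IsPeriodicL n L (fun z => ∑ i ∈ s, F i z) :=
  fun z j => Finset.sum_congr rfl fun i hi => h i hi z j

theorem IsPeriodicL.update_ofReal {L : ℝ} {f : (Fin n → ℂ) → ℂ} (hf : IsPeriodicL n L f)
    (x : Fin n → ℝ) (j : Fin n) :
    f (fun i => (Function.update x j (x j + 2 * Real.pi * L) i : ℂ)) = f (fun i => (x i : ℂ)) := by
  have h := Function.comp_update Complex.ofReal x j (x j + 2 * Real.pi * L)
  simp only [Function.comp_def] at h
  rw [h]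
  simpa using hf (fun i => (x i : ℂ)) j

end Periodic

section PeriodicIntegral

variable {n : ℕ} {E : Type*} {h : (Fin n → ℝ) → E} {T : ℝ}

theorem Pi.add_single_eq_update {ι M : Type*} [DecidableEq ι] [AddZeroClass M] (x : ι → M)
    (j : ι) (c : M) :
    x + Pi.single j c = Function.update x j (x j + c) := by
  ext i
  rcases eq_or_ne i j with rfl | hij <;> simp [*]

theorem apply_add_nat_mul_period (hper : ∀ x j, h (Function.update x j (x j + T)) = h x)
    (k : Fin n → ℕ) (x : Fin n → ℝ) : h (x + fun j => k j * T) = h x := by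
  have hsingle (y : Fin n → ℝ) (j : Fin n) (m : ℕ) : h (y + Pi.single j (m * T)) = h y := by
    have hp : Function.Periodic (fun t => h (Function.update y j t)) T :=
      fun t => by simpa using hper (Function.update y j t) j
    simpa [Pi.add_single_eq_update] using hp.nat_mul m (y j)
  suffices ∀ s : Finset (Fin n), ∀ x, h (x + ∑ j ∈ s, Pi.single j (k j * T)) = h x by
    simpa [Finset.univ_sum_single] using this Finset.univ x
  intro s
  induction s using Finset.induction_on with
  | empty => simp
  | insert a s ha ih => intro x; rw [Finset.sum_insert ha, ← add_assoc, ih, hsingle]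

theorem iUnion_Ico_nat_mul (hT : 0 ≤ T) (m : ℕ) :
    ⋃ a : Fin m, Ico ((a : ℕ) * T) (((a : ℕ) + 1) * T) = Ico 0 (m * T) := by
  ext y
  simp only [mem_iUnion, mem_Ico]
  constructor
  · rintro ⟨a, h1, h2⟩
    have ha : ((a : ℕ) : ℝ) + 1 ≤ m := by exact_mod_cast a.2
    exact ⟨le_trans (by positivity) h1, h2.trans_le (by gcongr)⟩
  · intro hy
    obtain ⟨i, hi, hyi⟩ := mem_iUnion₂.1
      (Ico_subset_biUnion_Ico m (fun i : ℕ => i * T) (by simpa using hy))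
    exact ⟨⟨i, Finset.mem_range.1 hi⟩, by simpa using hyi⟩

theorem pairwise_disjoint_Ico_nat_mul (hT : 0 ≤ T) :
    Pairwise (Function.onFun Disjoint fun a : ℕ => Ico (a * T) ((a + 1) * T)) := by
  have hmono : Monotone fun a : ℕ => (a : ℝ) * T := fun a b hab => by dsimp; gcongr
  simpa using hmono.pairwise_disjoint_on_Ico_succ

theorem setIntegral_univ_pi_Icc_nat_mul [NormedAddCommGroup E] [NormedSpace ℝ E]
    (hT : 0 ≤ T) (hh : Continuous h) (hper : ∀ x j, h (Function.update x j (x j + T)) = h x)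
    (m : ℕ) :
    ∫ x in univ.pi fun _ => Icc 0 (m * T), h x =
      (m ^ n) • ∫ x in univ.pi fun _ => Icc 0 T, h x := by
  have hIco (b : ℝ) :
      ∫ x in univ.pi fun _ : Fin n => Ico 0 b, h x = ∫ x in univ.pi fun _ => Icc 0 b, h x := by
    refine setIntegral_congr_set ?_
    rw [volume_pi, pi_univ_Icc]
    exact Measure.univ_pi_Ico_ae_eq_Icc
  let box (k : Fin n → Fin m) : Set (Fin n → ℝ) :=
    univ.pi fun j => Ico ((k j : ℕ) * T) (((k j : ℕ) + 1) * T)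
  have hunion : univ.pi (fun _ : Fin n => Ico 0 (m * T)) = ⋃ k, box k := by
    rw [iUnion_univ_pi (fun _ (a : Fin m) => Ico ((a : ℕ) * T) (((a : ℕ) + 1) * T)),
      iUnion_Ico_nat_mul hT]
  have hdisj : Pairwise (Function.onFun Disjoint box) := fun k k' hne => by
    obtain ⟨j, hj⟩ := Function.ne_iff.1 hne
    exact disjoint_univ_pi.2 ⟨j, pairwise_disjoint_Ico_nat_mul hT (Fin.val_injective.ne hj)⟩
  have hint (k : Fin n → Fin m) : IntegrableOn h (box k) :=
    (hh.continuousOn.integrableOn_compact (isCompact_univ_pi fun _ => isCompact_Icc)).mono_set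
      (pi_mono fun _ _ => Ico_subset_Icc_self)
  have hbox (k : Fin n → Fin m) : ∫ x in box k, h x = ∫ x in univ.pi fun _ => Ico 0 T, h x := by
    let c : Fin n → ℝ := fun j => (k j : ℕ) * T
    have hpre : (· + c) ⁻¹' box k = univ.pi fun _ => Ico 0 T := by
      ext x
      simp only [box, c, mem_preimage, mem_univ_pi, mem_Ico, Pi.add_apply]
      refine forall_congr' fun j => ?_
      constructor <;> rintro ⟨h1, h2⟩ <;> constructor <;> linarith
    rw [← hpre, ← (measurePreserving_add_right volume c).setIntegral_preimage_emb
      (measurableEmbedding_addRight c)]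
    simp_rw [c, apply_add_nat_mul_period hper]
  rw [← hIco, ← hIco, hunion, integral_iUnion_fintype
    (fun k => MeasurableSet.univ_pi fun _ => measurableSet_Ico) hdisj hint,
    Finset.sum_congr rfl fun k _ => hbox k]
  simp

end PeriodicIntegral

section ZeroAvg

variable {n : ℕ} {f g : (Fin n → ℂ) → ℂ}

theorem ZeroAvg.of_dvd {L L' : ℕ} (havg : ZeroAvg n L g)
    (hc : Continuous fun x : Fin n → ℝ => g fun i => (x i : ℂ)) (hper : IsPeriodicL n L g)
    (h : L ∣ L') : ZeroAvg n L' g := by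
  obtain ⟨m, rfl⟩ := h
  unfold ZeroAvg at havg ⊢
  rw [show 2 * Real.pi * ((L * m : ℕ) : ℝ) = m * (2 * Real.pi * L) by push_cast; ring,
    setIntegral_univ_pi_Icc_nat_mul (by positivity) hc hper.update_ofReal m, havg, smul_zero]

theorem ZeroAvg.sub {L : ℝ} (hf : ZeroAvg n L f) (hg : ZeroAvg n L g)
    (hfc : Continuous fun x : Fin n → ℝ => f fun i => (x i : ℂ))
    (hgc : Continuous fun x : Fin n → ℝ => g fun i => (x i : ℂ)) : ZeroAvg n L (f - g) := by
  have hbox : IsCompact (univ.pi fun _ : Fin n => Icc (0 : ℝ) (2 * Real.pi * L)) :=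
    isCompact_univ_pi fun _ => isCompact_Icc
  unfold ZeroAvg at hf hg ⊢
  simp only [Pi.sub_apply]
  rw [integral_sub (hfc.continuousOn.integrableOn_compact hbox)
    (hgc.continuousOn.integrableOn_compact hbox), hf, hg, sub_zero]

end ZeroAvg

theorem BddAbove.norm_sub {α E : Type*} [SeminormedAddCommGroup E] {f g : α → E} {s : Set α}
    (hf : BddAbove ((fun z => ‖f z‖) '' s)) (hg : BddAbove ((fun z => ‖g z‖) '' s)) :
    BddAbove ((fun z => ‖(f - g) z‖) '' s) := by
  obtain ⟨M, hM⟩ := hf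
  obtain ⟨M', hM'⟩ := hg
  refine ⟨M + M', forall_mem_image.2 fun z hz => ?_⟩
  exact (norm_sub_le _ _).trans
    (add_le_add (hM (mem_image_of_mem _ hz)) (hM' (mem_image_of_mem _ hz)))

def telescope {M : Type*} [Sub M] (a : ℕ → M) : ℕ → M
  | 0 => a 0
  | i + 1 => a (i + 1) - a i

theorem sum_range_succ_telescope {M : Type*} [AddCommGroup M] (a : ℕ → M) (N : ℕ) :
    ∑ i ∈ Finset.range (N + 1), telescope a i = a N := by
  induction N with
  | zero => simp [telescope]
  | succ N ih => rw [Finset.sum_range_succ, ih, telescope, add_sub_cancel]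

theorem telescope_admissible {n : ℕ} {ρ : ℝ} (hρ : 0 < ρ) {nseq : ℕ → ℕ}
    (hdvd : ∀ i, nseq i ∣ nseq (i + 1)) {gs : ℕ → (Fin n → ℂ) → ℂ}
    (hgsdiff : ∀ i, DifferentiableOn ℂ (gs i) (strip n ρ))
    (hgsper : ∀ i, IsPeriodicL n (nseq i) (gs i))
    (hgszero : ∀ i, ZeroAvg n (nseq i) (gs i))
    (hgsbdd : ∀ i, BddAbove ((fun z => ‖gs i z‖) '' strip n ρ)) (i : ℕ) :
    DifferentiableOn ℂ (telescope gs i) (strip n ρ) ∧ IsPeriodicL n (nseq i) (telescope gs i) ∧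
      ZeroAvg n (nseq i) (telescope gs i) ∧
      BddAbove ((fun z => ‖telescope gs i z‖) '' strip n ρ) := by
  cases i with
  | zero => exact ⟨hgsdiff 0, hgsper 0, hgszero 0, hgsbdd 0⟩
  | succ i =>
    have hcont (j : ℕ) : Continuous fun x : Fin n → ℝ => gs j fun k => (x k : ℂ) :=
      (hgsdiff j).continuousOn.comp_continuous (by fun_prop) (ofReal_mem_strip hρ)
    exact ⟨(hgsdiff _).sub (hgsdiff i), (hgsper _).sub ((hgsper i).of_dvd (hdvd i)),
      (hgszero _).sub ((hgszero i).of_dvd (hcont i) (hgsper i) (hdvd i)) (hcont _) (hcont i),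
      (hgsbdd _).norm_sub (hgsbdd i)⟩

theorem differentiableOn_tsum_of_summable_norm_bound {ι E F : Type*} [NormedAddCommGroup E]
    [NormedSpace ℂ E] [NormedAddCommGroup F] [NormedSpace ℂ F] [CompleteSpace F]
    {f : ι → E → F} {u : ι → ℝ} {U : Set E} (hu : Summable u)
    (hf : ∀ i, DifferentiableOn ℂ (f i) U) (hU : IsOpen U) (hf_le : ∀ i, ∀ w ∈ U, ‖f i w‖ ≤ u i) :
    DifferentiableOn ℂ (fun w => ∑' i, f i w) U := by
  intro x hx
  obtain ⟨r, hr, hxr⟩ := Metric.isOpen_iff.1 hU x hx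
  have hr2 : 0 < r / 2 := half_pos hr
  have hball (y : E) (hy : y ∈ Metric.ball x (r / 2)) : Metric.ball y (r / 2) ⊆ U :=
    (Metric.ball_subset_ball' (by linarith [Metric.mem_ball.1 hy])).trans hxr
  have hU_of_ball (y : E) (hy : y ∈ Metric.ball x (r / 2)) : y ∈ U :=
    hball y hy (Metric.mem_ball_self hr2)
  have hfderiv_le (i : ι) (y : E) (hy : y ∈ Metric.ball x (r / 2)) :
      ‖fderiv ℂ (f i) y‖ ≤ 2 * u i / (r / 2) := by
    refine Complex.norm_fderiv_le_div_of_mapsTo_ball ((hf i).mono (hball y hy)) (fun w hw => ?_) hr2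
    rw [Metric.mem_closedBall, dist_eq_norm]
    linarith [norm_sub_le (f i w) (f i y), hf_le i w (hball y hy hw), hf_le i y (hU_of_ball y hy)]
  have hTU := tendstoUniformlyOn_tsum ((hu.mul_left 2).div_const (r / 2)) hfderiv_le
  refine (hasFDerivAt_of_tendstoUniformlyOn Metric.isOpen_ball hTU (fun s y hy => ?_)
    (fun y hy => (Summable.of_norm_bounded hu fun i => hf_le i y (hU_of_ball y hy)).hasSum)
    (Metric.mem_ball_self hr2)).differentiableAt.differentiableWithinAt
  exact HasFDerivAt.fun_sum fun i _ =>
    ((hf i).differentiableAt (hU.mem_nhds (hU_of_ball y hy))).hasFDerivAt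

theorem SolvesDiophantine.tsum {n : ℕ} {ω : Fin n → ℝ} {S : Set (Fin n → ℂ)} (hS : IsOpen S)
    {f p : ℕ → (Fin n → ℂ) → ℂ} {g : (Fin n → ℂ) → ℂ} {u : ℕ → ℝ} (hu : Summable u)
    (hf : ∀ i, DifferentiableOn ℂ (f i) S) (hf_le : ∀ i, ∀ z ∈ S, ‖f i z‖ ≤ u i)
    (hsol : ∀ i, SolvesDiophantine n ω (f i) (p i) S)
    (hp : ∀ z ∈ S, Tendsto (fun N => ∑ i ∈ Finset.range N, p i z) atTop (𝓝 (g z))) :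
    SolvesDiophantine n ω (fun z => ∑' i, f i z) g S := by
  intro z hz
  have hline : Differentiable ℂ fun t : ℂ => fun j => z j + t * ω j := by fun_prop
  have hsum := Complex.hasSum_deriv_of_summable_norm
    (F := fun i t => f i fun j => z j + t * ω j) (z := 0) hu
    (fun i => (hf i).comp hline.differentiableOn (mapsTo_preimage _ _))
    (hS.preimage hline.continuous) (fun i t ht => hf_le i _ ht) (by simpa using hz)
  exact tendsto_nhds_unique (hsum.tendsto_sum_nat.congr fun N =>
    Finset.sum_congr rfl fun i _ => hsol i z hz) (hp z hz)

theorem exists_isPeriodicL_approx_tsum {n : ℕ} {S : Set (Fin n → ℂ)} {f : ℕ → (Fin n → ℂ) → ℂ}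
    {u : ℕ → ℝ} {nseq : ℕ → ℕ} (hu : Summable u) (hf_le : ∀ i, ∀ z ∈ S, ‖f i z‖ ≤ u i)
    (hper : ∀ i, IsPeriodicL n (nseq i) (f i)) (hdvd : ∀ i, nseq i ∣ nseq (i + 1))
    {ε : ℝ} (hε : 0 < ε) :
    ∃ N, ∃ h, IsPeriodicL n (nseq N) h ∧ ∀ z ∈ S, ‖∑' i, f i z - h z‖ ≤ ε := by
  obtain ⟨N, hN⟩ :=
    (Metric.tendstoUniformlyOn_iff.1 (tendstoUniformlyOn_tsum_nat hu hf_le) ε hε).exists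
  refine ⟨N, fun z => ∑ i ∈ Finset.range N, f i z,
    IsPeriodicL.finset_sum fun i hi => (hper i).of_dvd ?_,
    fun z hz => by simpa [dist_eq_norm] using (hN z hz).le⟩
  exact Nat.rel_of_forall_rel_succ_of_le (· ∣ ·) hdvd (Finset.mem_range.1 hi).le

theorem stmt6_general (n : ℕ) (ρ γ kn : ℝ) (hρ : 0 < ρ)
    (H : ∀ L : ℕ, 0 < L → ∀ g : (Fin n → ℂ) → ℂ, ∀ ω ∈ DiophSet n γ,
      DifferentiableOn ℂ g (strip n ρ) → IsPeriodicL n L g → ZeroAvg n L g →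
      BddAbove ((fun z => ‖g z‖) '' strip n ρ) →
      ∀ δ : ℝ, 0 < δ → ∃ f : (Fin n → ℂ) → ℂ,
        DifferentiableOn ℂ f (strip n (ρ - δ)) ∧ IsPeriodicL n L f ∧
        SolvesDiophantine n ω f g (strip n (ρ - δ)) ∧
        ∀ z ∈ strip n (ρ - δ),
          ‖f z‖ ≤ kn * (L : ℝ) ^ (2 * n + 1) / (γ * δ ^ (2 * n)) * supOn n ρ g)
    (ω : Fin n → ℝ) (hω : ω ∈ DiophSet n γ)
    (nseq : ℕ → ℕ) (hpos : ∀ i, 0 < nseq i)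
    (hdvd : ∀ i, nseq i ∣ nseq (i + 1))
    (g : (Fin n → ℂ) → ℂ) (gs : ℕ → (Fin n → ℂ) → ℂ)
    (hgsdiff : ∀ i, DifferentiableOn ℂ (gs i) (strip n ρ))
    (hgsper : ∀ i, IsPeriodicL n (nseq i) (gs i))
    (hgszero : ∀ i, ZeroAvg n (nseq i) (gs i))
    (hgsbdd : ∀ i, BddAbove ((fun z => ‖gs i z‖) '' strip n ρ))
    (hconv : TendstoUniformlyOn gs g atTop (strip n ρ))
    (hsum : Summable (fun i : ℕ => (nseq (i + 1) : ℝ) ^ (2 * n + 1)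
        * supOn n ρ (gs (i + 1) - gs i))) :
    ∀ δ : ℝ, 0 < δ → ∃ f : (Fin n → ℂ) → ℂ,
      DifferentiableOn ℂ f (strip n (ρ - δ)) ∧
      (∀ ε : ℝ, 0 < ε → ∃ L : ℕ, 0 < L ∧ ∃ h : (Fin n → ℂ) → ℂ,
        IsPeriodicL n L h ∧ ∀ z ∈ strip n (ρ - δ), ‖f z - h z‖ ≤ ε) ∧
      SolvesDiophantine n ω f g (strip n (ρ - δ)) ∧
      ∀ z ∈ strip n (ρ - δ),
        ‖f z‖ ≤ kn / (γ * δ ^ (2 * n)) *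
          ((nseq 0 : ℝ) ^ (2 * n + 1) * supOn n ρ (gs 0)
            + ∑' i : ℕ, (nseq (i + 1) : ℝ) ^ (2 * n + 1)
                * supOn n ρ (gs (i + 1) - gs i)) := by
  intro δ hδ
  have hpiece := telescope_admissible hρ hdvd hgsdiff hgsper hgszero hgsbdd
  choose F hFdiff hFper hFsol hFle using fun i => H (nseq i) (hpos i) (telescope gs i) ω hω
    (hpiece i).1 (hpiece i).2.1 (hpiece i).2.2.1 (hpiece i).2.2.2 δ hδ
  set C := kn / (γ * δ ^ (2 * n))
  set b : ℕ → ℝ := fun i => (nseq i : ℝ) ^ (2 * n + 1) * supOn n ρ (telescope gs i)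
  have hb : Summable b := (summable_nat_add_iff 1).1 hsum
  have hFle' (i : ℕ) (z) (hz : z ∈ strip n (ρ - δ)) : ‖F i z‖ ≤ C * b i :=
    (hFle i z hz).trans_eq (by ring)
  have hCb : Summable fun i => C * b i := hb.mul_left C
  refine ⟨fun z => ∑' i, F i z,
    differentiableOn_tsum_of_summable_norm_bound hCb hFdiff (isOpen_strip n _) hFle',
    fun ε hε => ?_, SolvesDiophantine.tsum (isOpen_strip n _) hCb hFdiff hFle' hFsol fun z hz => ?_,
    fun z hz => ?_⟩
  · obtain ⟨N, h, hper, hh⟩ := exists_isPeriodicL_approx_tsum hCb hFle' hFper hdvd hε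
    exact ⟨nseq N, hpos N, h, hper, hh⟩
  · have hpartial (N : ℕ) : ∑ i ∈ Finset.range (N + 1), telescope gs i z = gs N z := by
      rw [← Finset.sum_apply, sum_range_succ_telescope]
    refine (tendsto_add_atTop_iff_nat 1).1 ?_
    simpa only [hpartial] using hconv.tendsto_at (strip_subset_strip (by linarith) hz)
  · calc ‖∑' i, F i z‖ ≤ ∑' i, C * b i := tsum_of_norm_bounded hCb.hasSum fun i => hFle' i z hz
      _ = C * (b 0 + ∑' i, b (i + 1)) := by rw [tsum_mul_left, hb.tsum_eq_zero_add]

/-- Solenoidal diophantine equation: assuming the periodic solvability theorem with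
the rescaled bound `k_n L^{2n+1}/(γδ^{2n})`, a limit periodic `g` with zero constant
Pontryagin coefficient, truncations `gs i = g_{n_i}` along a divisibility-cofinal
sequence, and finite norm `‖g‖_{ρ,S,n}`, admits for every `δ > 0` a limit periodic
solution `f ∈ C_{ρ−δ,ℚ}` of `Df(ω) = g` with
`‖f‖_{ρ−δ} ≤ (k_n/(γδ^{2n})) ‖g‖_{ρ,S,n}`. -/
theorem stmt6 (n : ℕ) (ρ γ kn : ℝ) (hρ : 0 < ρ) (hγ : 0 < γ)
    (H : ∀ L : ℕ, 0 < L → ∀ g : (Fin n → ℂ) → ℂ, ∀ ω ∈ DiophSet n γ,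
      DifferentiableOn ℂ g (strip n ρ) → IsPeriodicL n L g → ZeroAvg n L g →
      BddAbove ((fun z => ‖g z‖) '' strip n ρ) →
      ∀ δ : ℝ, 0 < δ → ∃ f : (Fin n → ℂ) → ℂ,
        DifferentiableOn ℂ f (strip n (ρ - δ)) ∧ IsPeriodicL n L f ∧
        SolvesDiophantine n ω f g (strip n (ρ - δ)) ∧
        ∀ z ∈ strip n (ρ - δ),
          ‖f z‖ ≤ kn * (L : ℝ) ^ (2 * n + 1) / (γ * δ ^ (2 * n)) * supOn n ρ g)
    (ω : Fin n → ℝ) (hω : ω ∈ DiophSet n γ)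
    (nseq : ℕ → ℕ) (hmono : StrictMono nseq) (hpos : ∀ i, 0 < nseq i)
    (hdvd : ∀ i, nseq i ∣ nseq (i + 1))
    (g : (Fin n → ℂ) → ℂ) (gs : ℕ → (Fin n → ℂ) → ℂ)
    (hgdiff : DifferentiableOn ℂ g (strip n ρ))
    (hgbdd : BddAbove ((fun z => ‖g z‖) '' strip n ρ))
    (hgsdiff : ∀ i, DifferentiableOn ℂ (gs i) (strip n ρ))
    (hgsper : ∀ i, IsPeriodicL n (nseq i) (gs i))
    (hgszero : ∀ i, ZeroAvg n (nseq i) (gs i))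
    (hgsbdd : ∀ i, BddAbove ((fun z => ‖gs i z‖) '' strip n ρ))
    (hconv : TendstoUniformlyOn gs g atTop (strip n ρ))
    (hsum : Summable (fun i : ℕ => (nseq (i + 1) : ℝ) ^ (2 * n + 1)
        * supOn n ρ (gs (i + 1) - gs i))) :
    ∀ δ : ℝ, 0 < δ → ∃ f : (Fin n → ℂ) → ℂ,
      DifferentiableOn ℂ f (strip n (ρ - δ)) ∧
      (∀ ε : ℝ, 0 < ε → ∃ L : ℕ, 0 < L ∧ ∃ h : (Fin n → ℂ) → ℂ,
        IsPeriodicL n L h ∧ ∀ z ∈ strip n (ρ - δ), ‖f z - h z‖ ≤ ε) ∧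
      SolvesDiophantine n ω f g (strip n (ρ - δ)) ∧
      ∀ z ∈ strip n (ρ - δ),
        ‖f z‖ ≤ kn / (γ * δ ^ (2 * n)) *
          ((nseq 0 : ℝ) ^ (2 * n + 1) * supOn n ρ (gs 0)
            + ∑' i : ℕ, (nseq (i + 1) : ℝ) ^ (2 * n + 1)
                * supOn n ρ (gs (i + 1) - gs i)) :=
  stmt6_general n ρ γ kn hρ H ω hω nseq hpos hdvd g gs hgsdiff hgsper hgszero hgsbdd hconv hsum
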